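/- Suppose F and G have finite and equal second moments, i.e. ∫ x² dF(x) = ∫ x² dν(x) < ∞, and that for some constants A, B > 0 one has |G(x)| ≤ A e^{−x²/B} for all x ≤ 0 and |1 − G(x)| ≤ A e^{−x²/B} for all x ≥ 0. If Δ > 0, then the Kantorovich distance W₁(F, G) = ∫_{−∞}^{∞} |F(x) − G(x)| dx satisfies W₁(F, G) ≤ 16.02 √(AB) · Δ · log^{1/2}(e + 1/Δ). -/

import Mathlib

/-!
Split `∫ |F - G|` at `±T`. On `[-T, T]` the integrand is at most `Δ`. Beyond `T`, `|F - G|` is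
bounded by the two-sided tail `1 - F x + F (-x)` of `F` plus the Gaussian tails of `G`. By the
layer-cake formula, `∫₀^∞ x (1 - F x + F (-x)) dx` is half the second moment, and likewise for `G`;
so equal second moments let us trade the tail of `F` for that of `G` at the price of `Δ T²` (the
two integrands differ by at most `2Δ` on `[0, T]`), and a Markov-type bound gives
`T ∫_T^∞ (1 - F x + F (-x)) dx ≤ Δ T² + A B exp (-T²/B)`. Altogether
`T W₁ ≤ 3 Δ T² + 2 A B exp (-T²/B)`. Evaluating the hypotheses at `x = 0` gives `2A ≥ 1`, and then
`T² = 2 A B log (e + 1/Δ)` makes `exp (-T²/B) ≤ Δ`, whence `W₁ ≤ 4 √2 √(AB) Δ √(log (e + 1/Δ))`.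
-/

open MeasureTheory Set Real Filter Topology

section LayerCake

variable (μ : Measure ℝ)

lemma lintegral_Ioi_measure_Ioi_mul :
    ∫⁻ x in Ioi 0, μ (Ioi x) * ENNReal.ofReal x =
      ∫⁻ t, ENNReal.ofReal (max t 0 ^ 2 / 2) ∂μ := by
  have h := lintegral_comp_eq_lintegral_meas_lt_mul μ (f := fun t => max t 0) (g := id)
    (ae_of_all _ fun t => le_max_right t 0) (by fun_prop)
    (fun _ _ => intervalIntegral.intervalIntegrable_id)
    (ae_restrict_of_forall_mem measurableSet_Ioi fun _ hx => le_of_lt hx)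
  simp only [id, integral_id, ne_eq, OfNat.ofNat_ne_zero, not_false_eq_true, zero_pow,
    sub_zero] at h
  rw [h]
  refine setLIntegral_congr_fun measurableSet_Ioi fun x hx => ?_
  congr 2
  ext t
  simp [(mem_Ioi.1 hx).not_gt]

lemma lintegral_Ioi_measure_Iic_neg_mul :
    ∫⁻ x in Ioi 0, μ (Iic (-x)) * ENNReal.ofReal x =
      ∫⁻ t, ENNReal.ofReal (max (-t) 0 ^ 2 / 2) ∂μ := by
  have h := lintegral_comp_eq_lintegral_meas_le_mul μ (f := fun t => max (-t) 0) (g := id)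
    (ae_of_all _ fun t => le_max_right (-t) 0) (by fun_prop)
    (fun _ _ => intervalIntegral.intervalIntegrable_id)
    (ae_restrict_of_forall_mem measurableSet_Ioi fun _ hx => le_of_lt hx)
  simp only [id, integral_id, ne_eq, OfNat.ofNat_ne_zero, not_false_eq_true, zero_pow,
    sub_zero] at h
  rw [h]
  refine setLIntegral_congr_fun measurableSet_Ioi fun x hx => ?_
  congr 2
  ext t
  simp [(mem_Ioi.1 hx).not_ge, le_neg]

lemma lintegral_Ioi_mul_measure_tails :
    ∫⁻ x in Ioi 0, ENNReal.ofReal x * (μ (Ioi x) + μ (Iic (-x))) =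
      ∫⁻ t, ENNReal.ofReal (t ^ 2 / 2) ∂μ := by
  have hIoi : Measurable fun x : ℝ => μ (Ioi x) * ENNReal.ofReal x :=
    (Antitone.measurable fun _ _ h => measure_mono (Ioi_subset_Ioi h)).mul (by fun_prop)
  simp_rw [mul_add, mul_comm (ENNReal.ofReal _)]
  rw [lintegral_add_left hIoi, lintegral_Ioi_measure_Ioi_mul,
    lintegral_Ioi_measure_Iic_neg_mul, ← lintegral_add_left (by fun_prop)]
  congr with t
  rw [← ENNReal.ofReal_add (by positivity) (by positivity)]
  congr 1
  rcases le_total t 0 with ht | ht <;> simp [ht]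

lemma measurable_mul_measureReal_tails :
    Measurable fun x : ℝ => x * (μ.real (Ioi x) + μ.real (Iic (-x))) := by
  refine measurable_id.mul (Measurable.add ?_ ?_) <;>
    refine (Antitone.measurable fun a b hab => ?_).ennreal_toReal
  · exact measure_mono (Ioi_subset_Ioi hab)
  · exact measure_mono (Iic_subset_Iic.2 (neg_le_neg hab))

variable [IsFiniteMeasure μ]

lemma lintegral_Ioi_ofReal_mul_measureReal_tails :
    ∫⁻ x in Ioi 0, ENNReal.ofReal (x * (μ.real (Ioi x) + μ.real (Iic (-x)))) =
      ∫⁻ t, ENNReal.ofReal (t ^ 2 / 2) ∂μ := by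
  rw [← lintegral_Ioi_mul_measure_tails]
  refine setLIntegral_congr_fun measurableSet_Ioi fun x hx => ?_
  rw [ENNReal.ofReal_mul (le_of_lt hx), ENNReal.ofReal_add measureReal_nonneg measureReal_nonneg,
    ofReal_measureReal, ofReal_measureReal]

variable {μ}

lemma integrableOn_Ioi_mul_measureReal_tails (h : Integrable (fun t => t ^ 2) μ) :
    IntegrableOn (fun x : ℝ => x * (μ.real (Ioi x) + μ.real (Iic (-x)))) (Ioi 0) := by
  refine ⟨(measurable_mul_measureReal_tails μ).aestronglyMeasurable, ?_⟩
  rw [hasFiniteIntegral_iff_ofReal (ae_restrict_of_forall_mem measurableSet_Ioi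
    fun x hx => mul_nonneg (le_of_lt hx) (by positivity)),
    lintegral_Ioi_ofReal_mul_measureReal_tails]
  exact (h.div_const 2).lintegral_lt_top

lemma integral_Ioi_mul_measureReal_tails (h : Integrable (fun t => t ^ 2) μ) :
    ∫ x in Ioi 0, x * (μ.real (Ioi x) + μ.real (Iic (-x))) = (∫ t, t ^ 2 ∂μ) / 2 := by
  rw [integral_eq_lintegral_of_nonneg_ae (ae_restrict_of_forall_mem measurableSet_Ioi
    fun x hx => mul_nonneg (le_of_lt hx) (by positivity))
    (measurable_mul_measureReal_tails μ).aestronglyMeasurable,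
    lintegral_Ioi_ofReal_mul_measureReal_tails, ← integral_div,
    ← integral_eq_lintegral_of_nonneg_ae (ae_of_all _ fun t => by positivity)
      (h.div_const 2).aestronglyMeasurable]

end LayerCake

lemma integral_eq_intervalIntegral_add_integral_Ioi_add_neg {E : Type*} [NormedAddCommGroup E]
    [NormedSpace ℝ E] {f : ℝ → E} (hf : Integrable f) (T : ℝ) :
    ∫ x, f x = (∫ x in -T..T, f x) + ∫ x in Ioi T, (f x + f (-x)) := by
  rw [← intervalIntegral.integral_Iic_add_Ioi (b := -T) hf.integrableOn hf.integrableOn,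
    ← intervalIntegral.integral_interval_add_Ioi hf.integrableOn hf.integrableOn,
    integral_add hf.integrableOn hf.comp_neg.integrableOn, ← integral_comp_neg_Ioi]
  abel

lemma integrableOn_Ioi_of_integrableOn_Ioi_mul {p : ℝ → ℝ} {T : ℝ} (hT : 0 < T)
    (h : IntegrableOn (fun x => x * p x) (Ioi T)) : IntegrableOn p (Ioi T) := by
  have hbdd : IntegrableOn (fun x => x⁻¹ * (x * p x)) (Ioi T) :=
    h.bdd_mul (c := T⁻¹) measurable_inv.aestronglyMeasurable
      (ae_restrict_of_forall_mem measurableSet_Ioi fun x hx => by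
        rw [norm_inv, Real.norm_of_nonneg (hT.trans hx).le]
        exact inv_anti₀ hT (le_of_lt hx))
  refine hbdd.congr_fun (fun x hx => ?_) measurableSet_Ioi
  show x⁻¹ * (x * p x) = p x
  rw [inv_mul_cancel_left₀ (hT.trans hx).ne']

lemma mul_integral_Ioi_le_integral_Ioi_mul {p : ℝ → ℝ} {T : ℝ} (hp : ∀ x ∈ Ioi T, 0 ≤ p x)
    (hpi : IntegrableOn p (Ioi T)) (hxp : IntegrableOn (fun x => x * p x) (Ioi T)) :
    T * ∫ x in Ioi T, p x ≤ ∫ x in Ioi T, x * p x := by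
  rw [← integral_const_mul]
  exact setIntegral_mono_on (hpi.const_mul T) hxp measurableSet_Ioi
    fun x hx => mul_le_mul_of_nonneg_right (le_of_lt hx) (hp x hx)

lemma integral_Ioi_mul_le_of_integral_Ioi_mul_eq {p q : ℝ → ℝ} {δ T : ℝ} (hT : 0 ≤ T)
    (hp : IntegrableOn (fun x => x * p x) (Ioi 0)) (hq : IntegrableOn (fun x => x * q x) (Ioi 0))
    (hpq : ∫ x in Ioi 0, x * p x = ∫ x in Ioi 0, x * q x)
    (hδ : ∀ x ∈ Icc 0 T, q x - p x ≤ δ) :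
    ∫ x in Ioi T, x * p x ≤ δ * T ^ 2 / 2 + ∫ x in Ioi T, x * q x := by
  have hpT : (∫ x in Ioi 0, x * p x) - ∫ x in Ioi T, x * p x = ∫ x in (0)..T, x * p x :=
    intervalIntegral.integral_Ioi_sub_Ioi hp hT
  have hqT : (∫ x in Ioi 0, x * q x) - ∫ x in Ioi T, x * q x = ∫ x in (0)..T, x * q x :=
    intervalIntegral.integral_Ioi_sub_Ioi hq hT
  have hpi : IntervalIntegrable (fun x => x * p x) volume 0 T :=
    (intervalIntegrable_iff_integrableOn_Ioc_of_le hT).2 (hp.mono_set Ioc_subset_Ioi_self)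
  have hqi : IntervalIntegrable (fun x => x * q x) volume 0 T :=
    (intervalIntegrable_iff_integrableOn_Ioc_of_le hT).2 (hq.mono_set Ioc_subset_Ioi_self)
  have hmid : (∫ x in (0)..T, x * q x) - ∫ x in (0)..T, x * p x ≤ δ * T ^ 2 / 2 :=
    calc (∫ x in (0)..T, x * q x) - ∫ x in (0)..T, x * p x
        = ∫ x in (0)..T, (x * q x - x * p x) := (intervalIntegral.integral_sub hqi hpi).symm
      _ ≤ ∫ x in (0)..T, δ * x :=
          intervalIntegral.integral_mono_on hT (hqi.sub hpi)
            (intervalIntegral.intervalIntegrable_id.const_mul δ) fun x hx => by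
              rw [← mul_sub, mul_comm δ]; exact mul_le_mul_of_nonneg_left (hδ x hx) hx.1
      _ = δ * T ^ 2 / 2 := by rw [intervalIntegral.integral_const_mul, integral_id]; ring
  linarith

lemma exp_neg_sq_div_eq (B x : ℝ) : exp (-x ^ 2 / B) = exp (-B⁻¹ * x ^ 2) := by
  rw [neg_div, div_eq_inv_mul, neg_mul]

lemma integrable_mul_exp_neg_sq_div {B : ℝ} (hB : 0 < B) :
    Integrable fun x => x * exp (-x ^ 2 / B) := by
  simpa only [exp_neg_sq_div_eq] using integrable_mul_exp_neg_mul_sq (inv_pos.2 hB)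

lemma integrable_exp_neg_sq_div {B : ℝ} (hB : 0 < B) : Integrable fun x => exp (-x ^ 2 / B) := by
  simpa only [exp_neg_sq_div_eq] using integrable_exp_neg_mul_sq (inv_pos.2 hB)

lemma integral_Ioi_mul_exp_neg_sq_div {B : ℝ} (hB : 0 < B) (T : ℝ) :
    ∫ x in Ioi T, x * exp (-x ^ 2 / B) = B / 2 * exp (-T ^ 2 / B) := by
  have hderiv : ∀ x ∈ Ici T, HasDerivAt (fun y => -(B / 2) * exp (-y ^ 2 / B))
      (x * exp (-x ^ 2 / B)) x := fun x _ => by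
    have h : HasDerivAt (fun y => -y ^ 2 / B) (-(2 * x) / B) x := by
      simpa using (hasDerivAt_pow 2 x).neg.div_const B
    exact (h.exp.const_mul (-(B / 2))).congr_deriv (by field_simp)
  have hlim : Tendsto (fun y => -(B / 2) * exp (-y ^ 2 / B)) atTop (𝓝 0) := by
    have h : Tendsto (fun y : ℝ => -y ^ 2 / B) atTop atBot :=
      (tendsto_neg_atBot_iff.2 (tendsto_pow_atTop two_ne_zero)).atBot_div_const hB
    simpa using (tendsto_exp_atBot.comp h).const_mul (-(B / 2))
  rw [integral_Ioi_of_hasDerivAt_of_tendsto' hderiv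
    (integrable_mul_exp_neg_sq_div hB).integrableOn hlim]
  ring

lemma mul_integral_Ioi_exp_neg_sq_div_le {B : ℝ} (hB : 0 < B) (T : ℝ) :
    T * ∫ x in Ioi T, exp (-x ^ 2 / B) ≤ B / 2 * exp (-T ^ 2 / B) :=
  integral_Ioi_mul_exp_neg_sq_div hB T ▸ mul_integral_Ioi_le_integral_Ioi_mul
    (fun _ _ => (exp_pos _).le) (integrable_exp_neg_sq_div hB).integrableOn
    (integrable_mul_exp_neg_sq_div hB).integrableOn

/-- For the distribution function of a measure `μ` of total mass one this is
`μ (x, ∞) + μ (-∞, -x]`. -/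
def twoSidedTail (H : ℝ → ℝ) (x : ℝ) : ℝ := 1 - H x + H (-x)

section TwoSidedTail

variable {F G : ℝ → ℝ} {Δ A B T : ℝ}

lemma twoSidedTail_sub_twoSidedTail_le (hFG : ∀ x, |F x - G x| ≤ Δ) (x : ℝ) :
    twoSidedTail G x - twoSidedTail F x ≤ 2 * Δ := by
  unfold twoSidedTail
  linarith [(abs_le.1 (hFG x)).2, (abs_le.1 (hFG (-x))).1]

lemma twoSidedTail_le (hGneg : ∀ x : ℝ, x ≤ 0 → |G x| ≤ A * exp (-x ^ 2 / B))
    (hGpos : ∀ x : ℝ, 0 ≤ x → |1 - G x| ≤ A * exp (-x ^ 2 / B)) {x : ℝ} (hx : 0 ≤ x) :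
    twoSidedTail G x ≤ 2 * A * exp (-x ^ 2 / B) := by
  have hneg := hGneg (-x) (neg_nonpos.2 hx)
  rw [neg_sq] at hneg
  unfold twoSidedTail
  linarith [le_of_abs_le (hGpos x hx), le_of_abs_le hneg]

lemma abs_sub_add_abs_sub_neg_le (hF : ∀ x, F x ∈ Icc 0 1)
    (hGneg : ∀ x : ℝ, x ≤ 0 → |G x| ≤ A * exp (-x ^ 2 / B))
    (hGpos : ∀ x : ℝ, 0 ≤ x → |1 - G x| ≤ A * exp (-x ^ 2 / B)) {x : ℝ} (hx : 0 ≤ x) :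
    |F x - G x| + |F (-x) - G (-x)| ≤ twoSidedTail F x + 2 * A * exp (-x ^ 2 / B) := by
  have hneg := abs_le.1 (hGneg (-x) (neg_nonpos.2 hx))
  have hpos := abs_le.1 (hGpos x hx)
  rw [neg_sq] at hneg
  have h₁ : |F x - G x| ≤ 1 - F x + A * exp (-x ^ 2 / B) :=
    abs_sub_le_iff.2 ⟨by linarith [(hF x).2], by linarith⟩
  have h₂ : |F (-x) - G (-x)| ≤ F (-x) + A * exp (-x ^ 2 / B) :=
    abs_sub_le_iff.2 ⟨by linarith, by linarith [(hF (-x)).1]⟩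
  unfold twoSidedTail
  linarith

lemma mul_integral_Ioi_twoSidedTail_le (hB : 0 < B) (hT : 0 < T) (hF : ∀ x, F x ∈ Icc 0 1)
    (hFG : ∀ x, |F x - G x| ≤ Δ)
    (hGneg : ∀ x : ℝ, x ≤ 0 → |G x| ≤ A * exp (-x ^ 2 / B))
    (hGpos : ∀ x : ℝ, 0 ≤ x → |1 - G x| ≤ A * exp (-x ^ 2 / B))
    (hFi : IntegrableOn (fun x => x * twoSidedTail F x) (Ioi 0))
    (hGi : IntegrableOn (fun x => x * twoSidedTail G x) (Ioi 0))
    (hmom : ∫ x in Ioi 0, x * twoSidedTail F x = ∫ x in Ioi 0, x * twoSidedTail G x) :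
    T * ∫ x in Ioi T, twoSidedTail F x ≤ Δ * T ^ 2 + A * B * exp (-T ^ 2 / B) := by
  have hFiT := hFi.mono_set (Ioi_subset_Ioi hT.le)
  calc T * ∫ x in Ioi T, twoSidedTail F x
      ≤ ∫ x in Ioi T, x * twoSidedTail F x :=
        mul_integral_Ioi_le_integral_Ioi_mul
          (fun x _ => by unfold twoSidedTail; linarith [(hF x).2, (hF (-x)).1])
          (integrableOn_Ioi_of_integrableOn_Ioi_mul hT hFiT) hFiT
    _ ≤ 2 * Δ * T ^ 2 / 2 + ∫ x in Ioi T, x * twoSidedTail G x :=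
        integral_Ioi_mul_le_of_integral_Ioi_mul_eq hT.le hFi hGi hmom
          fun x _ => twoSidedTail_sub_twoSidedTail_le hFG x
    _ ≤ 2 * Δ * T ^ 2 / 2 + ∫ x in Ioi T, 2 * A * (x * exp (-x ^ 2 / B)) := by
        refine add_le_add le_rfl (setIntegral_mono_on (hGi.mono_set (Ioi_subset_Ioi hT.le))
          ((integrable_mul_exp_neg_sq_div hB).integrableOn.const_mul _) measurableSet_Ioi
          fun x hx => ?_)
        have hx : 0 ≤ x := (hT.trans hx).le
        rw [mul_left_comm]
        exact mul_le_mul_of_nonneg_left (twoSidedTail_le hGneg hGpos hx) hx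
    _ = Δ * T ^ 2 + A * B * exp (-T ^ 2 / B) := by
        rw [integral_const_mul, integral_Ioi_mul_exp_neg_sq_div hB]
        ring

end TwoSidedTail

theorem mul_integral_abs_sub_le {F G : ℝ → ℝ} {Δ A B T : ℝ} (hA : 0 ≤ A) (hB : 0 < B)
    (hT : 0 < T) (hF : ∀ x, F x ∈ Icc 0 1) (hFG : ∀ x, |F x - G x| ≤ Δ)
    (hGneg : ∀ x : ℝ, x ≤ 0 → |G x| ≤ A * exp (-x ^ 2 / B))
    (hGpos : ∀ x : ℝ, 0 ≤ x → |1 - G x| ≤ A * exp (-x ^ 2 / B))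
    (hint : Integrable fun x => |F x - G x|)
    (hFi : IntegrableOn (fun x => x * twoSidedTail F x) (Ioi 0))
    (hGi : IntegrableOn (fun x => x * twoSidedTail G x) (Ioi 0))
    (hmom : ∫ x in Ioi 0, x * twoSidedTail F x = ∫ x in Ioi 0, x * twoSidedTail G x) :
    T * ∫ x, |F x - G x| ≤ 3 * Δ * T ^ 2 + 2 * A * B * exp (-T ^ 2 / B) := by
  have hmid : ∫ x in -T..T, |F x - G x| ≤ Δ * (2 * T) := by
    have h := intervalIntegral.norm_integral_le_of_norm_le_const (a := -T) (b := T)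
      (f := fun x => |F x - G x|) fun x _ => by rw [Real.norm_eq_abs, abs_abs]; exact hFG x
    rw [sub_neg_eq_add, ← two_mul, abs_of_pos (by linarith)] at h
    exact (le_abs_self _).trans h
  have hFiT := integrableOn_Ioi_of_integrableOn_Ioi_mul hT (hFi.mono_set (Ioi_subset_Ioi hT.le))
  have hexp : IntegrableOn (fun x => 2 * A * exp (-x ^ 2 / B)) (Ioi T) :=
    ((integrable_exp_neg_sq_div hB).const_mul (2 * A)).integrableOn
  have htail : ∫ x in Ioi T, (|F x - G x| + |F (-x) - G (-x)|) ≤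
      (∫ x in Ioi T, twoSidedTail F x) + 2 * A * ∫ x in Ioi T, exp (-x ^ 2 / B) := by
    rw [← integral_const_mul, ← integral_add hFiT hexp]
    exact setIntegral_mono_on (hint.add hint.comp_neg).integrableOn (hFiT.add hexp)
      measurableSet_Ioi fun x hx => abs_sub_add_abs_sub_neg_le hF hGneg hGpos (hT.trans hx).le
  have hF_tail := mul_integral_Ioi_twoSidedTail_le hB hT hF hFG hGneg hGpos hFi hGi hmom
  have hexp_tail := mul_integral_Ioi_exp_neg_sq_div_le hB T
  rw [integral_eq_intervalIntegral_add_integral_Ioi_add_neg hint T]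
  rw [mul_add]
  linarith [mul_le_mul_of_nonneg_left hmid hT.le, mul_le_mul_of_nonneg_left htail hT.le,
    mul_le_mul_of_nonneg_left hexp_tail hA]

section DistributionFunction

variable {ν₁ ν₂ : Measure ℝ} [IsFiniteMeasure ν₁] [IsFiniteMeasure ν₂] {G : ℝ → ℝ}

lemma mul_twoSidedTail_eq (hν : ν₁.real univ - ν₂.real univ = 1)
    (hG : ∀ x, G x = ν₁.real (Iic x) - ν₂.real (Iic x)) (x : ℝ) :
    x * twoSidedTail G x = x * (ν₁.real (Ioi x) + ν₁.real (Iic (-x))) -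
      x * (ν₂.real (Ioi x) + ν₂.real (Iic (-x))) := by
  rw [twoSidedTail, hG, hG, ← compl_Iic, measureReal_compl measurableSet_Iic,
    measureReal_compl measurableSet_Iic]
  linear_combination -x * hν

lemma integrableOn_mul_twoSidedTail (hν : ν₁.real univ - ν₂.real univ = 1)
    (hG : ∀ x, G x = ν₁.real (Iic x) - ν₂.real (Iic x))
    (h₁ : Integrable (fun t => t ^ 2) ν₁) (h₂ : Integrable (fun t => t ^ 2) ν₂) :
    IntegrableOn (fun x => x * twoSidedTail G x) (Ioi 0) := by
  simp_rw [mul_twoSidedTail_eq hν hG]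
  exact (integrableOn_Ioi_mul_measureReal_tails h₁).sub (integrableOn_Ioi_mul_measureReal_tails h₂)

lemma integral_mul_twoSidedTail (hν : ν₁.real univ - ν₂.real univ = 1)
    (hG : ∀ x, G x = ν₁.real (Iic x) - ν₂.real (Iic x))
    (h₁ : Integrable (fun t => t ^ 2) ν₁) (h₂ : Integrable (fun t => t ^ 2) ν₂) :
    ∫ x in Ioi 0, x * twoSidedTail G x = ((∫ t, t ^ 2 ∂ν₁) - ∫ t, t ^ 2 ∂ν₂) / 2 := by
  simp_rw [mul_twoSidedTail_eq hν hG]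
  rw [integral_sub (integrableOn_Ioi_mul_measureReal_tails h₁)
    (integrableOn_Ioi_mul_measureReal_tails h₂), integral_Ioi_mul_measureReal_tails h₁,
    integral_Ioi_mul_measureReal_tails h₂]
  ring

lemma bddAbove_range_abs_sub {F : ℝ → ℝ} (hF : ∀ x, F x ∈ Icc 0 1)
    (hG : ∀ x, G x = ν₁.real (Iic x) - ν₂.real (Iic x)) :
    BddAbove (range fun x => |F x - G x|) := by
  refine ⟨1 + ν₁.real univ + ν₂.real univ, ?_⟩
  rintro _ ⟨x, rfl⟩
  show |F x - G x| ≤ _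
  have h₁ : ν₁.real (Iic x) ≤ ν₁.real univ := measureReal_mono (subset_univ _)
  have h₂ : ν₂.real (Iic x) ≤ ν₂.real univ := measureReal_mono (subset_univ _)
  rw [hG, abs_le]
  constructor <;> linarith [(hF x).1, (hF x).2, measureReal_nonneg (μ := ν₁) (s := Iic x),
    measureReal_nonneg (μ := ν₂) (s := Iic x)]

end DistributionFunction

lemma le_mul_sqrt_log_of_forall_mul_le {I Δ A B : ℝ} (hΔ : 0 < Δ) (hA : 1 ≤ 2 * A) (hB : 0 < B)
    (h : ∀ T > 0, T * I ≤ 3 * Δ * T ^ 2 + 2 * A * B * exp (-T ^ 2 / B)) :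
    I ≤ 16.02 * √(A * B) * Δ * √(log (exp 1 + 1 / Δ)) := by
  have hA0 : 0 < A := by linarith
  set L := log (exp 1 + 1 / Δ)
  have hL : 1 ≤ L := by
    rw [le_log_iff_exp_le (by positivity)]
    linarith [one_div_pos.2 hΔ]
  have hexpL : exp (-L) ≤ Δ := by
    rw [exp_neg, exp_log (by positivity)]
    exact inv_le_of_inv_le₀ hΔ (by rw [← one_div]; linarith [exp_pos 1])
  set T := √2 * √(A * B) * √L
  have hT2 : T ^ 2 = 2 * (A * B) * L := by
    rw [mul_pow, mul_pow, sq_sqrt zero_le_two, sq_sqrt (by positivity), sq_sqrt (by positivity)]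
  have hT : 0 < T := by positivity
  have hexpT : exp (-T ^ 2 / B) ≤ Δ := by
    refine (exp_le_exp.2 ?_).trans hexpL
    rw [hT2, neg_div, neg_le_neg_iff, le_div_iff₀ hB]
    linarith [mul_le_mul_of_nonneg_right hA (by positivity : 0 ≤ B * L)]
  have hI : T * I ≤ T * (4 * Δ * T) := by
    have h2AB : 2 * A * B ≤ T ^ 2 := by
      rw [hT2]; linarith [mul_le_mul_of_nonneg_left hL (by positivity : 0 ≤ 2 * (A * B))]
    linarith [h T hT, mul_le_mul_of_nonneg_left hexpT (by positivity : 0 ≤ 2 * A * B),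
      mul_le_mul_of_nonneg_left h2AB hΔ.le]
  have hsqrt2 : √2 ≤ 2 := by rw [sqrt_le_left zero_le_two]; norm_num
  calc I ≤ 4 * Δ * T := le_of_mul_le_mul_left hI hT
    _ = 4 * √2 * (√(A * B) * Δ * √L) := by ring
    _ ≤ 16.02 * (√(A * B) * Δ * √L) := by gcongr; linarith
    _ = 16.02 * √(A * B) * Δ * √L := by ring

theorem stmt_6_general
    (μ : Measure ℝ) [IsProbabilityMeasure μ]
    (ν₁ ν₂ : Measure ℝ) [IsFiniteMeasure ν₁] [IsFiniteMeasure ν₂]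
    (hν : (ν₁ Set.univ).toReal - (ν₂ Set.univ).toReal = 1)
    (F G : ℝ → ℝ)
    (hFdef : ∀ x, F x = (μ (Set.Iic x)).toReal)
    (hGdef : ∀ x, G x = (ν₁ (Set.Iic x)).toReal - (ν₂ (Set.Iic x)).toReal)
    (hμ2 : Integrable (fun x : ℝ => x ^ 2) μ)
    (hν₁2 : Integrable (fun x : ℝ => x ^ 2) ν₁)
    (hν₂2 : Integrable (fun x : ℝ => x ^ 2) ν₂)
    (hmom : ∫ x, x ^ 2 ∂μ = (∫ x, x ^ 2 ∂ν₁) - ∫ x, x ^ 2 ∂ν₂)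
    (Δ : ℝ) (hΔ : Δ = ⨆ x : ℝ, |F x - G x|) (hΔpos : 0 < Δ)
    (A B : ℝ) (hB : 0 < B)
    (hGneg : ∀ x : ℝ, x ≤ 0 → |G x| ≤ A * Real.exp (-x ^ 2 / B))
    (hGpos : ∀ x : ℝ, 0 ≤ x → |1 - G x| ≤ A * Real.exp (-x ^ 2 / B)) :
    (∫ x : ℝ, |F x - G x|) ≤
      16.02 * Real.sqrt (A * B) * Δ * Real.sqrt (Real.log (Real.exp 1 + 1 / Δ)) := by
  by_cases hint : Integrable fun x => |F x - G x|
  swap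
  · rw [integral_undef hint]; positivity
  have hF : ∀ x, F x ∈ Icc 0 1 := fun x => hFdef x ▸ ⟨measureReal_nonneg, measureReal_le_one⟩
  have hFG : ∀ x, |F x - G x| ≤ Δ := fun x => hΔ ▸ le_ciSup (bddAbove_range_abs_sub hF hGdef) x
  have hA : 1 ≤ 2 * A := by
    have h₀ := hGneg 0 le_rfl
    have h₁ := hGpos 0 le_rfl
    simp only [ne_eq, OfNat.ofNat_ne_zero, not_false_eq_true, zero_pow, neg_zero, zero_div,
      exp_zero, mul_one] at h₀ h₁
    linarith [abs_add_le (G 0) (1 - G 0), show |G 0 + (1 - G 0)| = 1 by simp]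
  -- `F` is the distribution function of the pair `(μ, 0)` in the sense of `hGdef`.
  have hμ : μ.real univ - (0 : Measure ℝ).real univ = 1 := by simp
  have hF' : ∀ x, F x = μ.real (Iic x) - (0 : Measure ℝ).real (Iic x) := by
    simp [hFdef, Measure.real]
  have hFi := integrableOn_mul_twoSidedTail hμ hF' hμ2 integrable_zero_measure
  have hGi := integrableOn_mul_twoSidedTail hν hGdef hν₁2 hν₂2
  have hmom' : ∫ x in Ioi 0, x * twoSidedTail F x = ∫ x in Ioi 0, x * twoSidedTail G x := by
    rw [integral_mul_twoSidedTail hμ hF' hμ2 integrable_zero_measure,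
      integral_mul_twoSidedTail hν hGdef hν₁2 hν₂2, hmom]
    simp
  exact le_mul_sqrt_log_of_forall_mul_le hΔpos hA hB fun T hT =>
    mul_integral_abs_sub_le (by linarith) hB hT hF hFG hGneg hGpos hint hFi hGi hmom'

/-- Inequality (4.1). Under the assumptions of Proposition 3.2, the Kantorovich distance
`W₁(F,G) = ∫ |F(x) - G(x)| dx` satisfies
`W₁(F,G) ≤ 16.02 √(AB) Δ log^{1/2}(e + 1/Δ)`, provided `Δ > 0`. -/
theorem stmt_6
    (μ : Measure ℝ) [IsProbabilityMeasure μ]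
    (ν₁ ν₂ : Measure ℝ) [IsFiniteMeasure ν₁] [IsFiniteMeasure ν₂]
    (hν : (ν₁ Set.univ).toReal - (ν₂ Set.univ).toReal = 1)
    (F G : ℝ → ℝ)
    (hFdef : ∀ x, F x = (μ (Set.Iic x)).toReal)
    (hGdef : ∀ x, G x = (ν₁ (Set.Iic x)).toReal - (ν₂ (Set.Iic x)).toReal)
    (hμ2 : Integrable (fun x : ℝ => x ^ 2) μ)
    (hν₁2 : Integrable (fun x : ℝ => x ^ 2) ν₁)
    (hν₂2 : Integrable (fun x : ℝ => x ^ 2) ν₂)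
    (hmom : ∫ x, x ^ 2 ∂μ = (∫ x, x ^ 2 ∂ν₁) - ∫ x, x ^ 2 ∂ν₂)
    (Δ : ℝ) (hΔ : Δ = ⨆ x : ℝ, |F x - G x|) (hΔpos : 0 < Δ)
    (A B : ℝ) (hA : 0 < A) (hB : 0 < B)
    (hGneg : ∀ x : ℝ, x ≤ 0 → |G x| ≤ A * Real.exp (-x ^ 2 / B))
    (hGpos : ∀ x : ℝ, 0 ≤ x → |1 - G x| ≤ A * Real.exp (-x ^ 2 / B)) :
    (∫ x : ℝ, |F x - G x|) ≤
      16.02 * Real.sqrt (A * B) * Δ * Real.sqrt (Real.log (Real.exp 1 + 1 / Δ)) :=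
  stmt_6_general μ ν₁ ν₂ hν F G hFdef hGdef hμ2 hν₁2 hν₂2 hmom Δ hΔ hΔpos A B hB hGneg hGpos
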